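/- Let ℋ_{λ,μ} be a C² Hamiltonian on 𝒟₁ = 𝕋^n × B₁ of the form ℋ_{λ,μ}(θ,I) = ℋ_λ(θ₂,I) + μF(θ,I), where ℋ_λ(θ₂,I) = ε^{-1/2} ϖ·I₁ + A I₁·I₁ + B I₂·I₂ + V(θ₂) + λR(θ₂,I), with |F|₂ ≤ C₀, |R|₂ ≤ C₀, |V|₂ ≤ 1, B a definite symmetric matrix and V having a nondegenerate maximum. Suppose that for parameters 0 ≤ λ ≤ λ₀ and 0 ≤ μ ≤ c₀λ there are open sets U± ⊆ 𝕋^n and C² functions S±_{λ,μ} : U± → ℝ, generating functions of the stable and unstable manifolds, such that: (i) the Lagrangian graphs {(θ, ∂_θ S±_{λ,μ}(θ)) : θ ∈ U±} are invariant under the Hamiltonian flow of ℋ_{λ,μ}, equivalently θ ↦ ℋ_{λ,μ}(θ, ∂_θ S±_{λ,μ}(θ)) is constant on U±; (ii) for μ = 0 the graphs lie in {I₁ = 0}, i.e. ∂_{θ₁} S±_{λ,0} ≡ 0; (iii) |∂_θ S±_{λ,μ} − ∂_θ S±_{λ,0}|_{C¹(U±)} ≤ C₀ μ; and (iv) there is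 a homoclinic point θ_{λ,μ} ∈ U⁺ ∩ U⁻ with ∂_θ S⁺_{λ,μ}(θ_{λ,μ}) = ∂_θ S⁻_{λ,μ}(θ_{λ,μ}). Then there exists a constant C, depending only on n, d and C₀, such that at least d of the eigenvalues a₁, …, a_n (the splitting angles) of the splitting matrix M = ∂²_θ(S⁺_{λ,μ} − S⁻_{λ,μ})(θ_{λ,μ}) satisfy |a_i| ≤ C μ. -/

import Mathlib

/-!
The splitting matrix `M` is symmetric (Schwarz). Since `∂_{θ₁} S^±_{λ,0} ≡ 0`, the columns of `M`
in the `θ₁`-directions are derivatives of `∂_{θ₁} (S^±_{λ,μ} - S^±_{λ,0})`, hence `O(μ)` by the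
`C¹` closeness, so `M` has norm `O(μ)` on the `d`-dimensional coordinate subspace `W` of the
`θ₁`-directions. A symmetric matrix of norm at most `T` on a subspace `W` has at least `dim W`
eigenvalues in `[-T, T]`: otherwise some `x ∈ W`, `x ≠ 0`, is orthogonal to every eigenvector
whose eigenvalue lies in `[-T, T]`, and then `‖M x‖ > T ‖x‖`.
-/

open scoped BigOperators Topology
open Filter Set

namespace NFpaper

/-- Phase space `ℝ^n × ℝ^n`; the first factor is the universal cover of `𝕋^n`. -/
abbrev Phase (n : ℕ) := (Fin n → ℝ) × (Fin n → ℝ)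

/-- The domain `𝒟_R = 𝕋^n × B_R` (described via lifts: no condition on the angles). -/
def Dom (n : ℕ) (R : ℝ) : Set (Phase n) := {p | ‖p.2‖ ≤ R}

/-- Closed ball `B_R` in the action space, for the sup norm. -/
def Ball (n : ℕ) (R : ℝ) : Set (Fin n → ℝ) := {I | ‖I‖ ≤ R}

/-- `f` is the lift of a function on `𝕋^n × ℝ^n`. -/
def PeriodicTheta {n : ℕ} (f : Phase n → ℝ) : Prop :=
  ∀ (m : Fin n → ℤ) (θ I : Fin n → ℝ), f (θ + (fun i => (m i : ℝ)), I) = f (θ, I)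

/-- `f` is the lift of a function on `𝕋^n`. -/
def PeriodicThetaV {n : ℕ} (f : (Fin n → ℝ) → ℝ) : Prop :=
  ∀ (m : Fin n → ℤ) (θ : Fin n → ℝ), f (θ + (fun i => (m i : ℝ))) = f θ

/-- `Φ` is the lift of a map of `𝕋^n × ℝ^n` to itself. -/
def PeriodicMap {n : ℕ} (Φ : Phase n → Phase n) : Prop :=
  ∀ (m : Fin n → ℤ) (θ I : Fin n → ℝ),
    Φ (θ + (fun i => (m i : ℝ)), I) =
      ((Φ (θ, I)).1 + (fun i => (m i : ℝ)), (Φ (θ, I)).2)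

/-- The linear Hamiltonian `l_ω (θ, I) = ω · I`. -/
def lin {n : ℕ} (ω : Fin n → ℝ) : Phase n → ℝ := fun p => ∑ i, ω i * p.2 i

/-- The Hamiltonian flow `X^t_w` of `l_w`. -/
def linFlow {n : ℕ} (w : Fin n → ℝ) (t : ℝ) (x : Phase n) : Phase n := (x.1 + t • w, x.2)

/-- The time average `[g]_w` along the linear flow with frequency `w`. -/
noncomputable def timeAvg {n : ℕ} (w : Fin n → ℝ) (g : Phase n → ℝ) (x : Phase n) : ℝ :=
  limUnder atTop (fun s : ℝ => (1 / s) * ∫ t in (0:ℝ)..s, g (linFlow w t x))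

/-- Iterated averages `[⋯[[g]_{v 0}]_{v 1}⋯]_{v (j-1)}`. -/
noncomputable def iterAvg {n : ℕ} :
    ∀ j : ℕ, (Fin j → (Fin n → ℝ)) → (Phase n → ℝ) → (Phase n → ℝ)
  | 0, _, g => g
  | (j+1), v, g => timeAvg (v (Fin.last j)) (iterAvg j (fun i => v i.castSucc) g)

/-- Poisson bracket, with derivatives taken within `s`. -/
noncomputable def pb {n : ℕ} (s : Set (Phase n)) (f g : Phase n → ℝ) (x : Phase n) : ℝ :=
  ∑ j : Fin n,
    (fderivWithin ℝ f s x ((0 : Fin n → ℝ), (Pi.single j 1 : Fin n → ℝ)) *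
        fderivWithin ℝ g s x ((Pi.single j 1 : Fin n → ℝ), (0 : Fin n → ℝ))
      - fderivWithin ℝ f s x ((Pi.single j 1 : Fin n → ℝ), (0 : Fin n → ℝ)) *
        fderivWithin ℝ g s x ((0 : Fin n → ℝ), (Pi.single j 1 : Fin n → ℝ)))

/-- The canonical symplectic form on `ℝ^n × ℝ^n`. -/
def symp {n : ℕ} (u v : Phase n) : ℝ := ∑ j, (u.2 j * v.1 j - u.1 j * v.2 j)

/-- `Φ` is symplectic on `s`: its differential preserves the canonical symplectic form. -/
def SymplecticOn {n : ℕ} (Φ : Phase n → Phase n) (s : Set (Phase n)) : Prop :=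
  ∀ x ∈ s, ∀ u v : Phase n,
    symp (fderivWithin ℝ Φ s x u) (fderivWithin ℝ Φ s x v) = symp u v

/-- The Hamiltonian vector field `X_H = (∂_I H, -∂_θ H)` (derivatives within `s`). -/
noncomputable def hamVF {n : ℕ} (s : Set (Phase n)) (H : Phase n → ℝ) (x : Phase n) : Phase n :=
  ((fun j => fderivWithin ℝ H s x ((0 : Fin n → ℝ), (Pi.single j 1 : Fin n → ℝ))),
   (fun j => -fderivWithin ℝ H s x ((Pi.single j 1 : Fin n → ℝ), (0 : Fin n → ℝ))))

/-- Vectors with integer components. -/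
def IsIntVec {n : ℕ} (x : Fin n → ℝ) : Prop := ∀ i, ∃ z : ℤ, x i = z

/-- Rational subspaces: subspaces spanned by integer vectors. -/
def IsRationalSub {n : ℕ} (V : Submodule ℝ (Fin n → ℝ)) : Prop :=
  ∃ S : Set (Fin n → ℝ), (∀ v ∈ S, IsIntVec v) ∧ V = Submodule.span ℝ S

/-- `F_ω`: the smallest rational subspace containing `ω`. -/
noncomputable def Fspace {n : ℕ} (ω : Fin n → ℝ) : Submodule ℝ (Fin n → ℝ) :=
  sInf {V | IsRationalSub V ∧ ω ∈ V}

/-- `v` is a `T`-periodic vector. -/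
def IsPeriodic {n : ℕ} (v : Fin n → ℝ) (T : ℝ) : Prop :=
  v ≠ 0 ∧ 0 < T ∧ IsIntVec (T • v) ∧ ∀ t : ℝ, 0 < t → IsIntVec (t • v) → T ≤ t

/-- The constant `Q_ω`. -/
noncomputable def Qmin {n : ℕ} (ω : Fin n → ℝ) : ℝ :=
  sInf {Q : ℝ | ∃ z : Fin n → ℤ, z ≠ 0 ∧ ((fun i => (z i : ℝ)) : Fin n → ℝ) ∈ Fspace ω ∧
    ‖((fun i => (z i : ℝ)) : Fin n → ℝ)‖ ≤ Q}

/-- The function `Ψ_ω`. -/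
noncomputable def Psi {n : ℕ} (ω : Fin n → ℝ) (Q : ℝ) : ℝ :=
  sSup {y : ℝ | ∃ z : Fin n → ℤ, z ≠ 0 ∧ ((fun i => (z i : ℝ)) : Fin n → ℝ) ∈ Fspace ω ∧
    ‖((fun i => (z i : ℝ)) : Fin n → ℝ)‖ ≤ Q ∧ y = |∑ i, (z i : ℝ) * ω i|⁻¹}

/-- The function `Δ_ω`. -/
noncomputable def Delta {n : ℕ} (ω : Fin n → ℝ) (Q : ℝ) : ℝ := Q * Psi ω Q

/-- The function `Δ*_ω`. -/
noncomputable def DeltaStar {n : ℕ} (ω : Fin n → ℝ) (x : ℝ) : ℝ :=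
  sSup {Q : ℝ | Qmin ω ≤ Q ∧ Delta ω Q ≤ x}

/-- The set of Diophantine vectors `Ω_d(γ, τ)`. -/
def Dio {n : ℕ} (d : ℕ) (γ τ : ℝ) (ω : Fin n → ℝ) : Prop :=
  Module.finrank ℝ (Fspace ω) = d ∧ ∀ Q : ℝ, Qmin ω ≤ Q → Psi ω Q ≤ γ⁻¹ * Q ^ τ

/-- The orthogonal projection `Π_F` onto `F = F_ω` for the Euclidean scalar product. -/
noncomputable def projF {n : ℕ} (ω : Fin n → ℝ) (x : Fin n → ℝ) : Fin n → ℝ :=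
  EuclideanSpace.equiv (Fin n) ℝ
    ((Submodule.orthogonalProjectionOnto
        ((Fspace ω).map ((EuclideanSpace.equiv (Fin n) ℝ).symm.toLinearEquiv.toLinearMap))
        ((EuclideanSpace.equiv (Fin n) ℝ).symm x) : EuclideanSpace ℝ (Fin n)))

/-- All derivatives of order `≤ k` of `f` are bounded by `M` on `s`. -/
def DerivBoundsOn {E F : Type*} [NormedAddCommGroup E] [NormedSpace ℝ E]
    [NormedAddCommGroup F] [NormedSpace ℝ F]
    (k : ℕ) (f : E → F) (s : Set E) (M : ℝ) : Prop :=
  ∀ i : ℕ, i ≤ k → ∀ x ∈ s, ‖iteratedFDerivWithin ℝ i f s x‖ ≤ M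

/-- `f` is of class `C^k` on `s` with `|f|_{C^k(s)} ≤ M`. -/
def CkNormLE {E F : Type*} [NormedAddCommGroup E] [NormedSpace ℝ E]
    [NormedAddCommGroup F] [NormedSpace ℝ F]
    (k : ℕ) (f : E → F) (s : Set E) (M : ℝ) : Prop :=
  ContDiffOn ℝ k f s ∧ DerivBoundsOn k f s M

/-- The family of directions `(e_{u 0}, 0), …, (0, e_{w (q-1)})` encoding the
partial derivative `∂_θ^{l₁} ∂_I^{l₂}` with `|l₁| = p`, `|l₂| = q`. -/
def mixedDirs (n : ℕ) {p q : ℕ} (u : Fin p → Fin n) (w : Fin q → Fin n) :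
    Fin (p + q) → Phase n :=
  fun i =>
    if h : (i : ℕ) < p then ((Pi.single (u ⟨i, h⟩) 1 : Fin n → ℝ), (0 : Fin n → ℝ))
    else ((0 : Fin n → ℝ),
      (Pi.single (w ⟨(i : ℕ) - p, by have := i.isLt; omega⟩) 1 : Fin n → ℝ))

/-- The gradient `∂_θ S` of a function of the angles. -/
noncomputable def gradV {N : ℕ} (S : (Fin N → ℝ) → ℝ) (θ : Fin N → ℝ) : Fin N → ℝ :=
  fun j => fderiv ℝ S θ (Pi.single j 1)

/-- The splitting matrix `∂²_θ (S⁺ - S⁻) (θ₀)`. -/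
noncomputable def splitMat {N : ℕ} (Sp Sm : (Fin N → ℝ) → ℝ) (θ₀ : Fin N → ℝ) :
    Matrix (Fin N) (Fin N) ℝ :=
  fun i j => fderiv ℝ (fun θ => gradV (fun θ' => Sp θ' - Sm θ') θ j) θ₀ (Pi.single i 1)

end NFpaper
namespace NFpaper

/-- The Hamiltonian `ℋ_{λ,μ}(θ,I) = ε^{-1/2} ϖ·I₁ + A I₁·I₁ + B I₂·I₂ + V(θ₂)
    + λ R(θ₂,I) + μ F(θ,I)` on `𝒟₁ = 𝕋^{d+m} × B₁`. -/
noncomputable def hamSplit (d m : ℕ) (ε : ℝ) (ϖ : Fin d → ℝ)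
    (A : Matrix (Fin d) (Fin d) ℝ) (B : Matrix (Fin m) (Fin m) ℝ)
    (V : (Fin m → ℝ) → ℝ) (Rp Fp : Phase (d + m) → ℝ) (lam mu : ℝ) :
    Phase (d + m) → ℝ :=
  fun x =>
    (Real.sqrt ε)⁻¹ * (∑ i : Fin d, ϖ i * x.2 (Fin.castAdd m i))
    + (∑ i : Fin d, ∑ j : Fin d, A i j * x.2 (Fin.castAdd m i) * x.2 (Fin.castAdd m j))
    + (∑ i : Fin m, ∑ j : Fin m, B i j * x.2 (Fin.natAdd d i) * x.2 (Fin.natAdd d j))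
    + V (fun i => x.1 (Fin.natAdd d i))
    + lam * Rp x + mu * Fp x

end NFpaper

open scoped RealInnerProductSpace
open Module

namespace EuclideanSpace

variable {ι κ : Type*}

lemma norm_le_sqrt_card_mul [Fintype ι] {x : EuclideanSpace ℝ ι}
    {r : ℝ} (hr : 0 ≤ r) (hx : ∀ i, |x i| ≤ r) : ‖x‖ ≤ √(Fintype.card ι) * r := by
  rw [EuclideanSpace.norm_eq, ← Real.sqrt_sq hr, ← Real.sqrt_mul (Nat.cast_nonneg _)]
  refine Real.sqrt_le_sqrt ?_
  calc ∑ i, ‖x i‖ ^ 2 ≤ ∑ _i : ι, r ^ 2 := Finset.sum_le_sum fun i _ => by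
        simpa [Real.norm_eq_abs, sq_abs] using pow_le_pow_left₀ (abs_nonneg _) (hx i) 2
    _ = Fintype.card ι * r ^ 2 := by simp

lemma apply_eq_zero_of_mem_span_single [DecidableEq ι] {c : κ → ι} {x : EuclideanSpace ℝ ι}
    (hx : x ∈ Submodule.span ℝ (Set.range fun k => EuclideanSpace.single (c k) (1 : ℝ)))
    {j : ι} (hj : j ∉ Set.range c) : x j = 0 := by
  induction hx using Submodule.span_induction with
  | mem y hy =>
    obtain ⟨k, rfl⟩ := hy
    simp [show j ≠ c k from fun h => hj ⟨k, h.symm⟩]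
  | zero => rfl
  | add y z _ _ hy hz => simp [hy, hz]
  | smul a y _ hy => simp [hy]

lemma finrank_span_single [Fintype ι] [Fintype κ] [DecidableEq ι] {c : κ → ι}
    (hc : Function.Injective c) :
    finrank ℝ (Submodule.span ℝ (Set.range fun k => EuclideanSpace.single (c k) (1 : ℝ))) =
      Fintype.card κ := by
  rw [finrank_span_eq_card]
  simpa [Function.comp_def] using
    (EuclideanSpace.basisFun ι ℝ).orthonormal.linearIndependent.comp c hc

end EuclideanSpace

namespace Matrix

variable {ι ι' κ : Type*} [Fintype ι] [Fintype κ] [DecidableEq ι]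

lemma norm_toEuclideanLin_le_of_abs_apply_le [Fintype ι'] (M : Matrix ι' ι ℝ) {c : κ → ι}
    (hc : Function.Injective c) {δ : ℝ} (hδ : 0 ≤ δ) (hcol : ∀ i k, |M i (c k)| ≤ δ)
    {x : EuclideanSpace ℝ ι} (hx : ∀ j ∉ Set.range c, x j = 0) :
    ‖M.toEuclideanLin x‖ ≤ √(Fintype.card ι') * Fintype.card κ * δ * ‖x‖ := by
  have hMx : ∀ i, M.toEuclideanLin x i = ∑ k, M i (c k) * x (c k) := fun i =>
    (Fintype.sum_of_injective c hc _ _ (fun j hj => by simp [hx j hj]) fun _ => rfl).symm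
  rw [mul_assoc, mul_assoc]
  refine EuclideanSpace.norm_le_sqrt_card_mul (by positivity) fun i => ?_
  calc |M.toEuclideanLin x i| ≤ ∑ k, |M i (c k) * x (c k)| := by
        rw [hMx]; exact Finset.abs_sum_le_sum_abs _ _
    _ ≤ ∑ _k : κ, δ * ‖x‖ := Finset.sum_le_sum fun k _ => by
        rw [abs_mul]
        exact mul_le_mul (hcol i k) (by simpa using PiLp.norm_apply_le x (c k))
          (abs_nonneg _) hδ
    _ = Fintype.card κ * (δ * ‖x‖) := by simp

namespace IsHermitian

variable {M : Matrix ι ι ℝ}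

lemma toEuclideanLin_eigenvectorBasis (hM : M.IsHermitian) (k : ι) :
    M.toEuclideanLin (hM.eigenvectorBasis k) = hM.eigenvalues k • hM.eigenvectorBasis k := by
  ext i
  simpa using congrFun (hM.mulVec_eigenvectorBasis k) i

lemma inner_eigenvectorBasis_toEuclideanLin (hM : M.IsHermitian) (k : ι)
    (x : EuclideanSpace ℝ ι) :
    ⟪hM.eigenvectorBasis k, M.toEuclideanLin x⟫ =
      hM.eigenvalues k * ⟪hM.eigenvectorBasis k, x⟫ := by
  rw [← isSymmetric_toEuclideanLin_iff.mpr hM, toEuclideanLin_eigenvectorBasis,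
    real_inner_smul_left]

lemma norm_toEuclideanLin_sq (hM : M.IsHermitian) (x : EuclideanSpace ℝ ι) :
    ‖M.toEuclideanLin x‖ ^ 2 =
      ∑ k, (hM.eigenvalues k * ⟪hM.eigenvectorBasis k, x⟫) ^ 2 := by
  simp_rw [← hM.eigenvectorBasis.sum_sq_inner_right, inner_eigenvectorBasis_toEuclideanLin]

theorem finrank_le_card_abs_eigenvalues_le (hM : M.IsHermitian) {T : ℝ} (hT : 0 ≤ T)
    (W : Submodule ℝ (EuclideanSpace ℝ ι))
    (hW : ∀ x ∈ W, ‖M.toEuclideanLin x‖ ≤ T * ‖x‖) :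
    finrank ℝ W ≤ Fintype.card {k // |hM.eigenvalues k| ≤ T} := by
  by_contra! hlt
  set u := hM.eigenvectorBasis
  let P : EuclideanSpace ℝ ι →ₗ[ℝ] ({k // |hM.eigenvalues k| ≤ T} → ℝ) :=
    LinearMap.pi fun k => innerₛₗ ℝ (u k)
  obtain ⟨⟨x, hxW⟩, hxP, hx0⟩ := Submodule.exists_mem_ne_zero_of_ne_bot
    (LinearMap.ker_ne_bot_of_finrank_lt (f := P ∘ₗ W.subtype) (by simpa using hlt))
  have hx0 : x ≠ 0 := fun h => hx0 (Subtype.ext h)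
  have hsmall : ∀ k, |hM.eigenvalues k| ≤ T → ⟪u k, x⟫ = 0 := fun k hk =>
    congrFun (LinearMap.mem_ker.mp hxP) ⟨k, hk⟩
  obtain ⟨k₀, hk₀⟩ : ∃ k, ⟪u k, x⟫ ≠ 0 := by
    by_contra! h
    exact hx0 (u.repr.map_eq_zero_iff.mp (by ext k; simpa [u.repr_apply_apply] using h k))
  have hbig : ∀ k, ⟪u k, x⟫ ≠ 0 → T ^ 2 < hM.eigenvalues k ^ 2 := fun k hk => by
    rw [← sq_abs (hM.eigenvalues k)]
    exact pow_lt_pow_left₀ (not_le.mp (mt (hsmall k) hk)) hT two_ne_zero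
  have hterm : ∀ k, T ^ 2 * ⟪u k, x⟫ ^ 2 ≤ (hM.eigenvalues k * ⟪u k, x⟫) ^ 2 := fun k => by
    by_cases hk : ⟪u k, x⟫ = 0
    · simp [hk]
    · rw [mul_pow]
      exact mul_le_mul_of_nonneg_right (hbig k hk).le (sq_nonneg _)
  have hlarge : T ^ 2 * ‖x‖ ^ 2 < ‖M.toEuclideanLin x‖ ^ 2 := by
    rw [hM.norm_toEuclideanLin_sq, ← u.sum_sq_inner_right, Finset.mul_sum]
    refine Finset.sum_lt_sum (fun k _ => hterm k) ⟨k₀, Finset.mem_univ _, ?_⟩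
    rw [mul_pow]
    exact mul_lt_mul_of_pos_right (hbig k₀ hk₀) (by positivity)
  have := hW x hxW
  nlinarith [norm_nonneg (M.toEuclideanLin x), norm_nonneg x]

theorem exists_linearIndependent_eigenvectors_abs_le (hM : M.IsHermitian) {T : ℝ} (hT : 0 ≤ T)
    (W : Submodule ℝ (EuclideanSpace ℝ ι))
    (hW : ∀ x ∈ W, ‖M.toEuclideanLin x‖ ≤ T * ‖x‖) (hκ : Fintype.card κ ≤ finrank ℝ W) :
    ∃ (v : κ → ι → ℝ) (a : κ → ℝ), LinearIndependent ℝ v ∧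
      (∀ j, M *ᵥ v j = a j • v j) ∧ ∀ j, |a j| ≤ T := by
  obtain ⟨e⟩ := Function.Embedding.nonempty_of_card_le
    (hκ.trans (hM.finrank_le_card_abs_eigenvalues_le hT W hW))
  refine ⟨fun j => ⇑(hM.eigenvectorBasis (e j)), fun j => hM.eigenvalues (e j), ?_,
    fun j => hM.mulVec_eigenvectorBasis _, fun j => (e j).2⟩
  exact (hM.eigenvectorBasis.orthonormal.linearIndependent.comp _
    (Subtype.val_injective.comp e.injective)).map' (WithLp.linearEquiv 2 ℝ (ι → ℝ)).toLinearMap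
      (LinearEquiv.ker _)

theorem exists_eigenvectors_abs_le_of_abs_apply_le (hM : M.IsHermitian) {c : κ → ι}
    (hc : Function.Injective c) {δ : ℝ} (hδ : 0 ≤ δ) (hcol : ∀ i k, |M i (c k)| ≤ δ) :
    ∃ (v : κ → ι → ℝ) (a : κ → ℝ), LinearIndependent ℝ v ∧
      (∀ j, M *ᵥ v j = a j • v j) ∧ ∀ j, |a j| ≤ √(Fintype.card ι) * Fintype.card κ * δ :=
  hM.exists_linearIndependent_eigenvectors_abs_le (by positivity) _
    (fun _ hx => M.norm_toEuclideanLin_le_of_abs_apply_le hc hδ hcol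
      fun _ => EuclideanSpace.apply_eq_zero_of_mem_span_single hx)
    (EuclideanSpace.finrank_span_single hc).ge

end IsHermitian

end Matrix

lemma abs_fderiv_component_le {E ι : Type*} [NormedAddCommGroup E] [NormedSpace ℝ E] [Fintype ι]
    {D : E → ι → ℝ} {x : E} (hD : DifferentiableAt ℝ D x) (j : ι) (v : E) :
    |fderiv ℝ (fun y => D y j) x v| ≤ ‖fderiv ℝ D x‖ * ‖v‖ := by
  rw [(hasFDerivAt_pi'.mp hD.hasFDerivAt j).fderiv]
  exact (norm_le_pi_norm (fderiv ℝ D x v) j).trans (ContinuousLinearMap.le_opNorm _ _)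

namespace NFpaper

variable {N : ℕ}

lemma norm_fderiv_le_of_derivBoundsOn {E F : Type*} [NormedAddCommGroup E] [NormedSpace ℝ E]
    [NormedAddCommGroup F] [NormedSpace ℝ F] {D : E → F} {U : Set E} {x : E} {δ : ℝ}
    (hU : IsOpen U) (hx : x ∈ U) (hD : DerivBoundsOn 1 D U δ) : ‖fderiv ℝ D x‖ ≤ δ := by
  rw [← fderivWithin_of_isOpen hU hx,
    ← norm_iteratedFDerivWithin_one D (hU.uniqueDiffWithinAt hx)]
  exact hD 1 le_rfl x hx

lemma differentiableAt_gradV {S : (Fin N → ℝ) → ℝ} {θ : Fin N → ℝ} (hS : ContDiffAt ℝ 2 S θ) :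
    DifferentiableAt ℝ (gradV S) θ := by
  have hS' : DifferentiableAt ℝ (fderiv ℝ S) θ :=
    (hS.fderiv_right (m := 1) le_rfl).differentiableAt one_ne_zero
  exact differentiableAt_pi.mpr fun j => hS'.clm_apply (differentiableAt_const _)

lemma gradV_sub {S S' : (Fin N → ℝ) → ℝ} {θ : Fin N → ℝ} (hS : DifferentiableAt ℝ S θ)
    (hS' : DifferentiableAt ℝ S' θ) :
    gradV (fun x => S x - S' x) θ = gradV S θ - gradV S' θ := by
  ext j
  simp [gradV, fderiv_fun_sub hS hS']

lemma splitMat_apply {Sp Sm : (Fin N → ℝ) → ℝ} {θ₀ : Fin N → ℝ}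
    (h : DifferentiableAt ℝ (fderiv ℝ fun θ => Sp θ - Sm θ) θ₀) (i j : Fin N) :
    splitMat Sp Sm θ₀ i j =
      fderiv ℝ (fderiv ℝ fun θ => Sp θ - Sm θ) θ₀ (Pi.single i 1) (Pi.single j 1) := by
  simp only [splitMat, gradV]
  rw [fderiv_clm_apply h (differentiableAt_const _)]
  simp

lemma splitMat_isHermitian {Sp Sm : (Fin N → ℝ) → ℝ} {θ₀ : Fin N → ℝ}
    (hp : ContDiffAt ℝ 2 Sp θ₀) (hm : ContDiffAt ℝ 2 Sm θ₀) :
    (splitMat Sp Sm θ₀).IsHermitian := by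
  have hf : ContDiffAt ℝ 2 (fun θ => Sp θ - Sm θ) θ₀ := hp.sub hm
  have hf' := (hf.fderiv_right (m := 1) le_rfl).differentiableAt one_ne_zero
  ext i j
  simp only [Matrix.conjTranspose_apply, star_trivial, splitMat_apply hf']
  exact hf.isSymmSndFDerivAt (by simp) _ _

lemma abs_splitMat_apply_le {Sp Sm Sp₀ Sm₀ : (Fin N → ℝ) → ℝ} {θ₀ : Fin N → ℝ}
    (hp : ContDiffAt ℝ 2 Sp θ₀) (hm : ContDiffAt ℝ 2 Sm θ₀)
    (hp₀ : ContDiffAt ℝ 2 Sp₀ θ₀) (hm₀ : ContDiffAt ℝ 2 Sm₀ θ₀) {j : Fin N}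
    (hp₀j : ∀ᶠ θ in 𝓝 θ₀, gradV Sp₀ θ j = 0) (hm₀j : ∀ᶠ θ in 𝓝 θ₀, gradV Sm₀ θ j = 0) {δ : ℝ}
    (hpδ : ‖fderiv ℝ (fun θ => gradV Sp θ - gradV Sp₀ θ) θ₀‖ ≤ δ)
    (hmδ : ‖fderiv ℝ (fun θ => gradV Sm θ - gradV Sm₀ θ) θ₀‖ ≤ δ) (i : Fin N) :
    |splitMat Sp Sm θ₀ i j| ≤ 2 * δ := by
  set Dp := fun θ => gradV Sp θ - gradV Sp₀ θ
  set Dm := fun θ => gradV Sm θ - gradV Sm₀ θ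
  have hDp : DifferentiableAt ℝ Dp θ₀ :=
    (differentiableAt_gradV hp).sub (differentiableAt_gradV hp₀)
  have hDm : DifferentiableAt ℝ Dm θ₀ :=
    (differentiableAt_gradV hm).sub (differentiableAt_gradV hm₀)
  have heq : (fun θ => gradV (fun x => Sp x - Sm x) θ j) =ᶠ[𝓝 θ₀] fun θ => (Dp θ - Dm θ) j := by
    filter_upwards [hp.eventually (by simp), hm.eventually (by simp), hp₀j, hm₀j]
      with θ hpθ hmθ hp₀θ hm₀θ
    rw [gradV_sub (hpθ.differentiableAt two_ne_zero) (hmθ.differentiableAt two_ne_zero)]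
    simp [Dp, Dm, hp₀θ, hm₀θ]
  calc |splitMat Sp Sm θ₀ i j|
      = |fderiv ℝ (fun θ => (Dp θ - Dm θ) j) θ₀ (Pi.single i 1)| := by
        rw [splitMat, heq.fderiv_eq]
    _ ≤ ‖fderiv ℝ (fun θ => Dp θ - Dm θ) θ₀‖ * ‖(Pi.single i 1 : Fin N → ℝ)‖ :=
        abs_fderiv_component_le (hDp.sub hDm) j _
    _ = ‖fderiv ℝ Dp θ₀ - fderiv ℝ Dm θ₀‖ := by
        rw [fderiv_fun_sub hDp hDm, Pi.norm_single, norm_one, mul_one]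
    _ ≤ 2 * δ := (norm_sub_le _ _).trans (by linarith)

theorem splitting_model_general (d m : ℕ) (hd : 1 ≤ d) (C₀ : ℝ) (hC₀ : 0 < C₀) :
    ∃ C : ℝ, 0 < C ∧
      ∀ (ε : ℝ), 0 < ε →
      ∀ (ϖ : Fin d → ℝ),
        (∀ q : Fin d → ℤ, q ≠ 0 → ∑ i, (q i : ℝ) * ϖ i ≠ 0) →
      ∀ (A : Matrix (Fin d) (Fin d) ℝ) (B : Matrix (Fin m) (Fin m) ℝ),
        A.IsSymm → B.IsSymm → (B.PosDef ∨ (-B).PosDef) →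
      ∀ V : (Fin m → ℝ) → ℝ, PeriodicThetaV V → ContDiff ℝ 2 V →
        (∀ i : ℕ, i ≤ 2 → ∀ θ₂, ‖iteratedFDeriv ℝ i V θ₂‖ ≤ 1) →
        (∃ θm : Fin m → ℝ, (∀ θ₂, V θ₂ ≤ V θm) ∧
          ∀ w : Fin m → ℝ, w ≠ 0 → iteratedFDeriv ℝ 2 V θm ![w, w] < 0) →
      ∀ (Fp Rp : Phase (d + m) → ℝ), PeriodicTheta Fp → PeriodicTheta Rp →
        CkNormLE 2 Fp (Dom (d + m) 1) C₀ → CkNormLE 2 Rp (Dom (d + m) 1) C₀ →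
        (∀ θ θ' I, (∀ i : Fin m, θ (Fin.natAdd d i) = θ' (Fin.natAdd d i)) →
          Rp (θ, I) = Rp (θ', I)) →
      ∀ (lam₀ c₀ : ℝ), 0 < lam₀ → 0 < c₀ →
      ∀ (Sp Sm : ℝ → ℝ → (Fin (d + m) → ℝ) → ℝ)
        (Up Um : Set (Fin (d + m) → ℝ))
        (θhom : ℝ → ℝ → (Fin (d + m) → ℝ)),
        IsOpen Up → IsOpen Um → Up.Nonempty → Um.Nonempty →
        (∀ lam mu : ℝ, 0 ≤ lam → lam ≤ lam₀ → 0 ≤ mu → mu ≤ c₀ * lam →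
          -- (A.2): generating functions of the invariant Lagrangian graphs
          (ContDiffOn ℝ 2 (Sp lam mu) Up ∧ ContDiffOn ℝ 2 (Sm lam mu) Um) ∧
          -- (i) the graphs are invariant: the Hamiltonian is constant on them
          (∀ θ ∈ Up, ∀ θ' ∈ Up,
            hamSplit d m ε ϖ A B V Rp Fp lam mu (θ, gradV (Sp lam mu) θ) =
              hamSplit d m ε ϖ A B V Rp Fp lam mu (θ', gradV (Sp lam mu) θ')) ∧
          (∀ θ ∈ Um, ∀ θ' ∈ Um,
            hamSplit d m ε ϖ A B V Rp Fp lam mu (θ, gradV (Sm lam mu) θ) =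
              hamSplit d m ε ϖ A B V Rp Fp lam mu (θ', gradV (Sm lam mu) θ')) ∧
          -- (ii) for `μ = 0` the graphs lie in `{I₁ = 0}`
          (∀ θ ∈ Up, ∀ i : Fin d, gradV (Sp lam 0) θ (Fin.castAdd m i) = 0) ∧
          (∀ θ ∈ Um, ∀ i : Fin d, gradV (Sm lam 0) θ (Fin.castAdd m i) = 0) ∧
          -- (iii) the graphs are `μ`-close to the unperturbed ones in `C¹`
          DerivBoundsOn 1 (fun θ => gradV (Sp lam mu) θ - gradV (Sp lam 0) θ) Up (C₀ * mu) ∧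
          DerivBoundsOn 1 (fun θ => gradV (Sm lam mu) θ - gradV (Sm lam 0) θ) Um (C₀ * mu) ∧
          -- (A.3)/(iv): a homoclinic point
          θhom lam mu ∈ Up ∩ Um ∧
          gradV (Sp lam mu) (θhom lam mu) = gradV (Sm lam mu) (θhom lam mu)) →
        ∀ lam mu : ℝ, 0 ≤ lam → lam ≤ lam₀ → 0 ≤ mu → mu ≤ c₀ * lam →
          ∃ (v : Fin d → (Fin (d + m) → ℝ)) (a : Fin d → ℝ),
            LinearIndependent ℝ v ∧
            (∀ i, (splitMat (Sp lam mu) (Sm lam mu) (θhom lam mu)).mulVec (v i) =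
              a i • v i) ∧
            ∀ i, |a i| ≤ C * mu := by
  have hd_pos : (0 : ℝ) < d := by exact_mod_cast hd
  refine ⟨√((d + m : ℕ) : ℝ) * d * (2 * C₀), by positivity, ?_⟩
  intro ε _ ϖ _ A B _ _ _ V _ _ _ _ Fp Rp _ _ _ _ _ lam₀ c₀ _ hc₀ Sp Sm Up Um θhom hUp hUm _ _
    hS lam mu hlam hlam₀ hmu hmuc
  obtain ⟨⟨hSp, hSm⟩, -, -, hp₀, hm₀, hpδ, hmδ, ⟨hθp, hθm⟩, -⟩ := hS lam mu hlam hlam₀ hmu hmuc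
  obtain ⟨⟨hSp₀, hSm₀⟩, -⟩ := hS lam 0 hlam hlam₀ le_rfl (by positivity)
  have hp : ∀ {S : (Fin (d + m) → ℝ) → ℝ}, ContDiffOn ℝ 2 S Up →
      ContDiffAt ℝ 2 S (θhom lam mu) := fun h => h.contDiffAt (hUp.mem_nhds hθp)
  have hm : ∀ {S : (Fin (d + m) → ℝ) → ℝ}, ContDiffOn ℝ 2 S Um →
      ContDiffAt ℝ 2 S (θhom lam mu) := fun h => h.contDiffAt (hUm.mem_nhds hθm)
  have hcol : ∀ i k, |splitMat (Sp lam mu) (Sm lam mu) (θhom lam mu) i (Fin.castAdd m k)| ≤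
      2 * (C₀ * mu) := fun i k =>
    abs_splitMat_apply_le (hp hSp) (hm hSm) (hp hSp₀) (hm hSm₀)
      (eventually_of_mem (hUp.mem_nhds hθp) fun θ hθ => hp₀ θ hθ k)
      (eventually_of_mem (hUm.mem_nhds hθm) fun θ hθ => hm₀ θ hθ k)
      (norm_fderiv_le_of_derivBoundsOn hUp hθp hpδ)
      (norm_fderiv_le_of_derivBoundsOn hUm hθm hmδ) i
  obtain ⟨v, a, hv, hva, ha⟩ :=
    (splitMat_isHermitian (hp hSp) (hm hSm)).exists_eigenvectors_abs_le_of_abs_apply_le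
      (Fin.castAdd_injective d m) (by positivity) hcol
  refine ⟨v, a, hv, hva, fun k => (ha k).trans_eq ?_⟩
  simp only [Fintype.card_fin]
  ring

/-- **Theorem 2.6 (splitting estimates for the model Hamiltonian).**
Under assumptions (A.1), (A.2), (A.3), at least `d` of the splitting angles
(eigenvalues of the splitting matrix) are bounded by `C μ`. -/
theorem splitting_model (d m : ℕ) (hd : 1 ≤ d) (hm : 1 ≤ m) (C₀ : ℝ) (hC₀ : 0 < C₀) :
    ∃ C : ℝ, 0 < C ∧
      ∀ (ε : ℝ), 0 < ε →
      ∀ (ϖ : Fin d → ℝ),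
        (∀ q : Fin d → ℤ, q ≠ 0 → ∑ i, (q i : ℝ) * ϖ i ≠ 0) →
      ∀ (A : Matrix (Fin d) (Fin d) ℝ) (B : Matrix (Fin m) (Fin m) ℝ),
        A.IsSymm → B.IsSymm → (B.PosDef ∨ (-B).PosDef) →
      ∀ V : (Fin m → ℝ) → ℝ, PeriodicThetaV V → ContDiff ℝ 2 V →
        (∀ i : ℕ, i ≤ 2 → ∀ θ₂, ‖iteratedFDeriv ℝ i V θ₂‖ ≤ 1) →
        (∃ θm : Fin m → ℝ, (∀ θ₂, V θ₂ ≤ V θm) ∧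
          ∀ w : Fin m → ℝ, w ≠ 0 → iteratedFDeriv ℝ 2 V θm ![w, w] < 0) →
      ∀ (Fp Rp : Phase (d + m) → ℝ), PeriodicTheta Fp → PeriodicTheta Rp →
        CkNormLE 2 Fp (Dom (d + m) 1) C₀ → CkNormLE 2 Rp (Dom (d + m) 1) C₀ →
        (∀ θ θ' I, (∀ i : Fin m, θ (Fin.natAdd d i) = θ' (Fin.natAdd d i)) →
          Rp (θ, I) = Rp (θ', I)) →
      ∀ (lam₀ c₀ : ℝ), 0 < lam₀ → 0 < c₀ →
      ∀ (Sp Sm : ℝ → ℝ → (Fin (d + m) → ℝ) → ℝ)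
        (Up Um : Set (Fin (d + m) → ℝ))
        (θhom : ℝ → ℝ → (Fin (d + m) → ℝ)),
        IsOpen Up → IsOpen Um → Up.Nonempty → Um.Nonempty →
        (∀ lam mu : ℝ, 0 ≤ lam → lam ≤ lam₀ → 0 ≤ mu → mu ≤ c₀ * lam →
          -- (A.2): generating functions of the invariant Lagrangian graphs
          (ContDiffOn ℝ 2 (Sp lam mu) Up ∧ ContDiffOn ℝ 2 (Sm lam mu) Um) ∧
          -- (i) the graphs are invariant: the Hamiltonian is constant on them
          (∀ θ ∈ Up, ∀ θ' ∈ Up,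
            hamSplit d m ε ϖ A B V Rp Fp lam mu (θ, gradV (Sp lam mu) θ) =
              hamSplit d m ε ϖ A B V Rp Fp lam mu (θ', gradV (Sp lam mu) θ')) ∧
          (∀ θ ∈ Um, ∀ θ' ∈ Um,
            hamSplit d m ε ϖ A B V Rp Fp lam mu (θ, gradV (Sm lam mu) θ) =
              hamSplit d m ε ϖ A B V Rp Fp lam mu (θ', gradV (Sm lam mu) θ')) ∧
          -- (ii) for `μ = 0` the graphs lie in `{I₁ = 0}`
          (∀ θ ∈ Up, ∀ i : Fin d, gradV (Sp lam 0) θ (Fin.castAdd m i) = 0) ∧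
          (∀ θ ∈ Um, ∀ i : Fin d, gradV (Sm lam 0) θ (Fin.castAdd m i) = 0) ∧
          -- (iii) the graphs are `μ`-close to the unperturbed ones in `C¹`
          DerivBoundsOn 1 (fun θ => gradV (Sp lam mu) θ - gradV (Sp lam 0) θ) Up (C₀ * mu) ∧
          DerivBoundsOn 1 (fun θ => gradV (Sm lam mu) θ - gradV (Sm lam 0) θ) Um (C₀ * mu) ∧
          -- (A.3)/(iv): a homoclinic point
          θhom lam mu ∈ Up ∩ Um ∧
          gradV (Sp lam mu) (θhom lam mu) = gradV (Sm lam mu) (θhom lam mu)) →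
        ∀ lam mu : ℝ, 0 ≤ lam → lam ≤ lam₀ → 0 ≤ mu → mu ≤ c₀ * lam →
          ∃ (v : Fin d → (Fin (d + m) → ℝ)) (a : Fin d → ℝ),
            LinearIndependent ℝ v ∧
            (∀ i, (splitMat (Sp lam mu) (Sm lam mu) (θhom lam mu)).mulVec (v i) =
              a i • v i) ∧
            ∀ i, |a i| ≤ C * mu :=
  splitting_model_general d m hd C₀ hC₀

end NFpaper
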